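/- arXiv:2302.01757 — 3 statements merged into one kernel-verified Lean document; each statement's English description precedes it below -/
import Mathlib

section
/- Fix p ∈ (0,1), μ ∈ [0,1], and an integer r ≥ 0 with μ - 1 + p^r ≥ 0. Define ψ(n_ins, n_del) = p^(n_del - n_ins)·(μ - 1 + p^(r - n_del)) on the set of nonnegative integers with n_ins + n_del ≤ r. Then ψ is monotonically non-decreasing in each argument; in particular the minimum of ψ over this constraint set is attained at (n_ins, n_del) = (0, 0) and equals μ - 1 + p^r. -/
/-- The objective `ψ(n_ins, n_del) = p^(n_del - n_ins) * (μ - 1 + p^(r - n_del))` of the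
Levenshtein certificate optimization. -/
noncomputable def psi (p μ : ℝ) (r ni nd : ℕ) : ℝ :=
  p ^ ((nd : ℤ) - (ni : ℤ)) * (μ - 1 + p ^ (r - nd))

/-- `ψ` is monotonically non-decreasing in each argument on the constraint set
`{(n_ins, n_del) : n_ins + n_del ≤ r}`; in particular its minimum there is attained at
`(0, 0)` and equals `μ - 1 + p ^ r`. -/
theorem psi_monotone_min (p μ : ℝ) (r : ℕ) (hp0 : 0 < p) (hp1 : p < 1)
    (hμ0 : 0 ≤ μ) (hμ1 : μ ≤ 1) (h : 0 ≤ μ - 1 + p ^ r) :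
    (∀ ni nd : ℕ, (ni + 1) + nd ≤ r → psi p μ r ni nd ≤ psi p μ r (ni + 1) nd) ∧
    (∀ ni nd : ℕ, ni + (nd + 1) ≤ r → psi p μ r ni nd ≤ psi p μ r ni (nd + 1)) ∧
    (∀ ni nd : ℕ, ni + nd ≤ r → psi p μ r 0 0 ≤ psi p μ r ni nd) ∧
    psi p μ r 0 0 = μ - 1 + p ^ r := by
  have hB : ∀ nd : ℕ, 0 ≤ μ - 1 + p ^ (r - nd) := by
    intro nd
    have : p ^ r ≤ p ^ (r - nd) :=
      pow_le_pow_of_le_one hp0.le hp1.le (Nat.sub_le r nd)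
    linarith
  have hz : ∀ z : ℤ, 0 < p ^ z := fun z => zpow_pos hp0 z
  have h1 : ∀ ni nd : ℕ, (ni + 1) + nd ≤ r → psi p μ r ni nd ≤ psi p μ r (ni + 1) nd := by
    intro ni nd _
    unfold psi
    apply mul_le_mul_of_nonneg_right _ (hB nd)
    have e : ((nd : ℤ) - (ni + 1 : ℕ)) = ((nd : ℤ) - ni) + (-1) := by push_cast; ring
    rw [e, zpow_add₀ hp0.ne', zpow_neg, zpow_one]
    have hinv : 1 ≤ p⁻¹ := by
      have := mul_inv_cancel₀ hp0.ne'
      nlinarith [inv_pos.mpr hp0]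
    nlinarith [hz ((nd : ℤ) - ni)]
  have h2 : ∀ ni nd : ℕ, ni + (nd + 1) ≤ r → psi p μ r ni nd ≤ psi p μ r ni (nd + 1) := by
    intro ni nd hle
    unfold psi
    have hsub : r - (nd + 1) + 1 = r - nd := by omega
    have key : p ^ (r - (nd + 1)) * p = p ^ (r - nd) := by
      rw [← pow_succ, hsub]
    have e : ((nd + 1 : ℕ) : ℤ) - ni = ((nd : ℤ) - ni) + 1 := by push_cast; ring
    rw [e, zpow_add₀ hp0.ne', zpow_one]
    have hpos := hz ((nd : ℤ) - ni)
    calc p ^ ((nd : ℤ) - ni) * (μ - 1 + p ^ (r - nd))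
        = p ^ ((nd : ℤ) - ni) * (μ - 1 + p ^ (r - (nd + 1)) * p) := by rw [key]
      _ ≤ p ^ ((nd : ℤ) - ni) * (p * (μ - 1 + p ^ (r - (nd + 1)))) := by
          apply mul_le_mul_of_nonneg_left _ hpos.le
          nlinarith [hB (nd + 1)]
      _ = p ^ ((nd : ℤ) - ni) * p * (μ - 1 + p ^ (r - (nd + 1))) := by ring
  refine ⟨h1, h2, ?_, by simp [psi]⟩
  intro ni
  induction ni with
  | zero =>
    intro nd
    induction nd with
    | zero => intro _; exact le_refl _
    | succ m ih =>
      intro hle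
      exact le_trans (ih (by omega)) (h2 0 m (by omega))
  | succ n ih =>
    intro nd hle
    exact le_trans (ih nd (by omega)) (h1 n nd (by omega))
end

section
/- Fix p ∈ (0,1), a sequence length n ≥ 1, retained count k = ⌈(1-p)·n⌉ with k ≤ n, a radius r with k + r ≤ n, and confidence μ ∈ [0,1]. Then μ - 1 + p^r ≥ μ - 1 + C(n-r, k)/C(n, k); that is, the RS-Del Hamming-distance confidence lower bound dominates the randomized-ablation lower bound. -/
/-- Key combinatorial inequality: `C(n-r,k) * n^r ≤ C(n,k) * (n-k)^r`. -/
lemma choose_ratio_aux (k : ℕ) : ∀ (r n : ℕ), k + r ≤ n →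
    (n - r).choose k * n ^ r ≤ n.choose k * (n - k) ^ r := by
  intro r
  induction r with
  | zero => intro n h; simp
  | succ r ih =>
    intro n h
    have hkr : k + r ≤ n := by omega
    have hm : k + 1 ≤ n - r := by omega
    have hmpos : 0 < n - r := by omega
    -- identity: (n - r) * (n - r - 1).choose k = (n - r).choose k * (n - r - k)
    have hid : (n - r) * ((n - r - 1).choose k) = (n - r).choose k * (n - r - k) := by
      have h1 := Nat.add_one_mul_choose_eq (n - r - 1) k
      rw [show n - r - 1 + 1 = n - r from by omega] at h1
      rw [h1, Nat.choose_succ_right_eq]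
    have ihn := ih n hkr
    -- (n - r - k) * n ≤ (n - k) * (n - r)
    have hcross : (n - r - k) * n ≤ (n - k) * (n - r) := by
      have key2 : ∀ a b : ℕ, a ≤ b → a * (b + r) ≤ (a + r) * b := by
        intro a b hab; nlinarith
      have hthis := key2 (n - r - k) (n - r) (by omega)
      have e1 : n - k = n - r - k + r := by omega
      have e2 : n = n - r + r := by omega
      rw [e1]
      calc (n - r - k) * n = (n - r - k) * (n - r + r) := by rw [← e2]
        _ ≤ (n - r - k + r) * (n - r) := hthis
    -- show goal multiplied by (n - r)
    have key : (n - (r + 1)).choose k * n ^ (r + 1) * (n - r)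
        ≤ n.choose k * (n - k) ^ (r + 1) * (n - r) := by
      have e3 : n - (r + 1) = n - r - 1 := by omega
      calc (n - (r + 1)).choose k * n ^ (r + 1) * (n - r)
          = ((n - r) * (n - r - 1).choose k) * (n ^ r * n) := by rw [e3]; ring
        _ = ((n - r).choose k * (n - r - k)) * (n ^ r * n) := by rw [hid]
        _ = ((n - r).choose k * n ^ r) * ((n - r - k) * n) := by ring
        _ ≤ (n.choose k * (n - k) ^ r) * ((n - k) * (n - r)) :=
              Nat.mul_le_mul ihn hcross
        _ = n.choose k * (n - k) ^ (r + 1) * (n - r) := by ring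
    exact Nat.le_of_mul_le_mul_right key hmpos

/-- The RS-Del Hamming-distance confidence lower bound `μ - 1 + p ^ r` dominates the
randomized-ablation lower bound `μ - 1 + C(n-r, k) / C(n, k)` for `k = ⌈(1-p)·n⌉`. -/
theorem rsdel_dominates_rsabn (p : ℝ) (hp0 : 0 < p) (hp1 : p < 1)
    (n k r : ℕ) (hn : 1 ≤ n) (hk : k = ⌈(1 - p) * (n : ℝ)⌉₊) (hkn : k ≤ n)
    (hkr : k + r ≤ n) (μ : ℝ) (hμ0 : 0 ≤ μ) (hμ1 : μ ≤ 1) :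
    μ - 1 + ((n - r).choose k : ℝ) / (n.choose k : ℝ) ≤ μ - 1 + p ^ r := by
  have hnpos : (0 : ℝ) < n := by exact_mod_cast hn
  have hchoosepos : (0 : ℝ) < n.choose k := by
    exact_mod_cast Nat.choose_pos hkn
  have hnk : ((n - k : ℕ) : ℝ) = (n : ℝ) - k := by
    push_cast [Nat.cast_sub hkn]; ring
  -- (n - k)/n ≤ p
  have hceil : (1 - p) * (n : ℝ) ≤ k := by
    rw [hk]; exact Nat.le_ceil _
  have hq : ((n - k : ℕ) : ℝ) / n ≤ p := by
    rw [hnk, div_le_iff₀ hnpos]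
    nlinarith
  have hq0 : (0 : ℝ) ≤ ((n - k : ℕ) : ℝ) / n :=
    div_nonneg (by positivity) (le_of_lt hnpos)
  -- cast the combinatorial inequality
  have hnat := choose_ratio_aux k r n hkr
  have hcast : ((n - r).choose k : ℝ) * (n : ℝ) ^ r
      ≤ (n.choose k : ℝ) * ((n - k : ℕ) : ℝ) ^ r := by
    exact_mod_cast hnat
  have h1 : ((n - r).choose k : ℝ) / (n.choose k : ℝ)
      ≤ (((n - k : ℕ) : ℝ) / n) ^ r := by
    rw [div_pow, div_le_div_iff₀ hchoosepos (by positivity)]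
    nlinarith
  have h2 : (((n - k : ℕ) : ℝ) / n) ^ r ≤ p ^ r :=
    pow_le_pow_left₀ hq0 hq r
  linarith
end

section
/- Let z* be a longest common subsequence of sequences x' and x, with |z*| = L. Suppose ε'* ⊆ {1,...,|x'|} and ε* ⊆ {1,...,|x|} are index sets (of size L each) such that retaining exactly the indices of ε'* in x' and of ε* in x both yield z*. Then there is a bijection m from subsets of ε'* to subsets of ε* such that for every ε' ⊆ ε'*, retaining indices ε' in x' yields the same sequence as retaining indices m(ε') in x. -/
def retain {α : Type*} (x : List α) (ε : Finset ℕ) : List α :=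
  (x.zipIdx.filter (fun q => q.2 ∈ ε)).map Prod.fst

lemma retain_eq_filterMap {α : Type*} (x : List α) (ε : Finset ℕ) :
    retain x ε = (List.range x.length).filterMap
      (fun i => if i ∈ ε then x[i]? else none) := by
  induction x using List.reverseRecOn with
  | nil => simp [retain]
  | append_singleton x a ih =>
    simp only [retain, List.zipIdx_append, List.filter_append, List.map_append,
      List.length_append, List.length_singleton, List.range_succ, List.filterMap_append]
    congr 1
    · rw [← retain, ih]
      apply List.filterMap_congr
      intro i hi
      simp only [List.mem_range] at hi
      rw [List.getElem?_append_left hi]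
    · by_cases h : x.length ∈ ε <;>
        simp [h, List.filter]

lemma retain_subset_eq {α : Type*} (x : List α) (E ε : Finset ℕ) (hsub : ε ⊆ E) :
    retain x ε = (((List.range x.length).filter (· ∈ E)).filter (· ∈ ε)).filterMap (fun i => x[i]?) := by
  rw [retain_eq_filterMap, List.filterMap_filter, List.filterMap_filter]
  apply List.filterMap_congr
  intro i _
  by_cases h : i ∈ ε
  · simp [h, hsub h]
  · by_cases h2 : i ∈ E <;> simp [h, h2]

lemma filterMap_get?_pmap {α : Type*} (x : List α) (l : List ℕ)
    (h : ∀ i ∈ l, i < x.length) :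
    l.filterMap (fun i => x[i]?) = l.pmap (fun i hi => x.get ⟨i, hi⟩) h := by
  induction l with
  | nil => simp
  | cons a t ih =>
    simp only [List.filterMap_cons, List.pmap]
    rw [List.getElem?_eq_getElem (h a (by simp)), ih (fun i hi => h i (List.mem_cons_of_mem _ hi))]; rfl

/-- Lemma 2 (equivalent edits): if `z*` is a longest common subsequence of `x'` and `x`,
witnessed by index sets `ε'*` and `ε*` (with `|ε'*| = |ε*| = |z*|`) retaining which yields
`z*` in each sequence, then there is a bijection `m` between subsets of `ε'*` and subsets
of `ε*` such that retaining `ε' ⊆ ε'*` in `x'` yields the same sequence as retaining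
`m(ε')` in `x`. -/
theorem equivalent_edits {α : Type*} (x' x zs : List α)
    (hsub' : zs.Sublist x') (hsub : zs.Sublist x)
    (hmax : ∀ z : List α, z.Sublist x' → z.Sublist x → z.length ≤ zs.length)
    (E' E : Finset ℕ) (hE' : E'.card = zs.length) (hE : E.card = zs.length)
    (hret' : retain x' E' = zs) (hret : retain x E = zs) :
    ∃ m : Finset ℕ → Finset ℕ,
      Set.BijOn m {s | s ⊆ E'} {s | s ⊆ E} ∧
      ∀ ε' : Finset ℕ, ε' ⊆ E' → retain x' ε' = retain x (m ε') := by
  classical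
  set l' : List ℕ := (List.range x'.length).filter (· ∈ E') with hl'def
  set l : List ℕ := (List.range x.length).filter (· ∈ E) with hldef
  have hmem' : ∀ i ∈ l', i ∈ E' ∧ i < x'.length := by
    intro i hi; rw [hl'def, List.mem_filter, List.mem_range] at hi
    exact ⟨by simpa using hi.2, hi.1⟩
  have hmem : ∀ i ∈ l, i ∈ E ∧ i < x.length := by
    intro i hi; rw [hldef, List.mem_filter, List.mem_range] at hi
    exact ⟨by simpa using hi.2, hi.1⟩
  have hlt' : ∀ i ∈ l', i < x'.length := fun i hi => (hmem' i hi).2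
  have hlt : ∀ i ∈ l, i < x.length := fun i hi => (hmem i hi).2
  have hzs' : zs = l'.pmap (fun i hi => x'.get ⟨i, hi⟩) hlt' := by
    rw [← hret', retain_subset_eq x' E' E' (subset_refl _), ← hl'def,
      List.filter_eq_self.mpr (fun a ha => by simpa using (hmem' a ha).1),
      filterMap_get?_pmap x' l' hlt']
  have hzs : zs = l.pmap (fun i hi => x.get ⟨i, hi⟩) hlt := by
    rw [← hret, retain_subset_eq x E E (subset_refl _), ← hldef,
      List.filter_eq_self.mpr (fun a ha => by simpa using (hmem a ha).1),
      filterMap_get?_pmap x l hlt]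
  have hlen' : l'.length = zs.length := by rw [hzs', List.length_pmap]
  have hlen : l.length = zs.length := by rw [hzs, List.length_pmap]
  have hnd' : l'.Nodup := List.nodup_range.filter _
  have hnd : l.Nodup := List.nodup_range.filter _
  have htf' : ∀ i, i ∈ E' ↔ i ∈ l' := by
    have hsubF : l'.toFinset ⊆ E' := fun i hi => (hmem' i (List.mem_toFinset.mp hi)).1
    have hcard : l'.toFinset.card = zs.length := by
      rw [List.toFinset_card_of_nodup hnd', hlen']
    have heq : l'.toFinset = E' :=
      Finset.eq_of_subset_of_card_le hsubF (by rw [hcard, hE'])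
    intro i; rw [← heq, List.mem_toFinset]
  have htf : ∀ i, i ∈ E ↔ i ∈ l := by
    have hsubF : l.toFinset ⊆ E := fun i hi => (hmem i (List.mem_toFinset.mp hi)).1
    have hcard : l.toFinset.card = zs.length := by
      rw [List.toFinset_card_of_nodup hnd, hlen]
    have heq : l.toFinset = E :=
      Finset.eq_of_subset_of_card_le hsubF (by rw [hcard, hE])
    intro i; rw [← heq, List.mem_toFinset]
  -- the index-transport function
  set f : ℕ → ℕ := fun i => l.getD (l'.idxOf i) 0 with hfdef
  have hf_get : ∀ j : Fin l'.length, f (l'.get j) =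
      l.get ⟨j, by rw [hlen]; exact hlen' ▸ j.2⟩ := by
    intro j
    have hidx : l'.idxOf (l'.get j) = j := List.get_idxOf hnd' j
    rw [hfdef]
    simp only [hidx]
    rw [List.getD_eq_getElem l 0 (by rw [hlen]; exact hlen' ▸ j.2)]; rfl
  -- pointwise value equality
  have hval : ∀ a ∈ l', x'[a]? = x[f a]? := by
    intro a ha
    have hja : l'.idxOf a < l'.length := List.idxOf_lt_length_iff.mpr ha
    set j : Fin l'.length := ⟨l'.idxOf a, hja⟩ with hjdef
    have hag : l'.get j = a := List.idxOf_get hja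
    have hjz : (j : ℕ) < zs.length := hlen' ▸ j.2
    have h1 : zs[(j : ℕ)]? = x'[l'.get j]? := by
      rw [hzs', List.getElem?_eq_getElem (by simpa using j.2),
        List.getElem?_eq_getElem (hlt' _ (l'.get_mem _))]
      exact congrArg some (List.getElem_pmap _ hlt' _)
    have h2 : ∀ (k : ℕ) (hk : k < l.length), k = (j : ℕ) →
        zs[k]? = x[l.get ⟨k, hk⟩]? := by
      intro k hk _
      rw [hzs, List.getElem?_eq_getElem (by simpa using hk),
        List.getElem?_eq_getElem (hlt _ (l.get_mem _))]
      exact congrArg some (List.getElem_pmap _ hlt _)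
    rw [← hag, hf_get j]
    exact h1.symm.trans (h2 _ _ rfl)
  -- injectivity of f on E'
  have hinj : ∀ a ∈ E', ∀ b ∈ E', f a = f b → a = b := by
    intro a ha b hb hab
    have ha' := (htf' a).mp ha
    have hb' := (htf' b).mp hb
    have hja : l'.idxOf a < l'.length := List.idxOf_lt_length_iff.mpr ha'
    have hjb : l'.idxOf b < l'.length := List.idxOf_lt_length_iff.mpr hb'
    have hga : l'.get ⟨_, hja⟩ = a := List.idxOf_get hja
    have hgb : l'.get ⟨_, hjb⟩ = b := List.idxOf_get hjb
    rw [← hga, ← hgb, hf_get, hf_get] at hab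
    have := (List.Nodup.get_inj_iff hnd).mp hab
    have : l'.idxOf a = l'.idxOf b := by simpa using this
    rw [← hga, ← hgb]; simp [this]
  -- f maps E' onto E
  have hfE : ∀ a ∈ E', f a ∈ E := by
    intro a ha
    have ha' := (htf' a).mp ha
    have hja : l'.idxOf a < l'.length := List.idxOf_lt_length_iff.mpr ha'
    have hga : l'.get ⟨_, hja⟩ = a := List.idxOf_get hja
    rw [← hga, hf_get]
    exact (hmem _ (l.get_mem _)).1
  have himg : E'.image f = E := by
    apply Finset.eq_of_subset_of_card_le
    · intro b hb
      obtain ⟨a, ha, rfl⟩ := Finset.mem_image.mp hb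
      exact hfE a ha
    · rw [Finset.card_image_of_injOn (fun a ha b hb => hinj a ha b hb), hE', hE]
  refine ⟨fun s => (s ∩ E').image f, ⟨⟨?_, ?_, ?_⟩, ?_⟩⟩
  · -- MapsTo
    intro s hs
    simp only [Set.mem_setOf_eq] at hs ⊢
    intro b hb
    obtain ⟨a, ha, rfl⟩ := Finset.mem_image.mp hb
    exact hfE a (Finset.mem_of_mem_inter_right ha)
  · -- InjOn
    intro s hs t ht hst
    simp only [Set.mem_setOf_eq] at hs ht
    simp only at hst
    rw [Finset.inter_eq_left.mpr hs, Finset.inter_eq_left.mpr ht] at hst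
    ext a
    constructor
    · intro has
      have : f a ∈ t.image f := hst ▸ Finset.mem_image_of_mem f has
      obtain ⟨b, hbt, hba⟩ := Finset.mem_image.mp this
      rwa [hinj b (ht hbt) a (hs has) hba] at hbt
    · intro hat
      have : f a ∈ s.image f := hst ▸ Finset.mem_image_of_mem f hat
      obtain ⟨b, hbs, hba⟩ := Finset.mem_image.mp this
      rwa [hinj b (hs hbs) a (ht hat) hba] at hbs
  · -- SurjOn
    intro t ht
    simp only [Set.mem_setOf_eq] at ht
    refine ⟨E'.filter (fun i => f i ∈ t), by simp [Set.mem_setOf_eq, Finset.filter_subset], ?_⟩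
    simp only
    rw [Finset.inter_eq_left.mpr (Finset.filter_subset _ _)]
    ext b
    simp only [Finset.mem_image, Finset.mem_filter]
    constructor
    · rintro ⟨a, ⟨_, hat⟩, rfl⟩; exact hat
    · intro hbt
      have : b ∈ E'.image f := himg ▸ ht hbt
      obtain ⟨a, ha, rfl⟩ := Finset.mem_image.mp this
      exact ⟨a, ⟨ha, hbt⟩, rfl⟩
  · -- the retain equality
    intro ε' hε'
    simp only
    rw [Finset.inter_eq_left.mpr hε']
    have himgsub : ε'.image f ⊆ E := by
      intro b hb
      obtain ⟨a, ha, rfl⟩ := Finset.mem_image.mp hb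
      exact hfE a (hε' ha)
    rw [retain_subset_eq x' E' ε' hε', retain_subset_eq x E (ε'.image f) himgsub,
      ← hl'def, ← hldef]
    -- rewrite l as l'.map f
    have hmapf : l'.map f = l := by
      apply List.ext_get (by rw [List.length_map, hlen', hlen])
      intro j h1 h2
      simp only [List.get_eq_getElem, List.getElem_map]
      exact hf_get ⟨j, by simpa using h1⟩
    rw [← hmapf, List.filter_map, List.filterMap_map]
    have hfiltc : l'.filter ((fun i => decide (i ∈ ε'.image f)) ∘ f)
        = l'.filter (fun i => decide (i ∈ ε')) := by
      apply List.filter_congr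
      intro a ha
      simp only [Function.comp_apply, decide_eq_decide, Finset.mem_image]
      constructor
      · rintro ⟨b, hb, hba⟩
        rwa [hinj b (hε' hb) a ((htf' a).mpr ha) hba] at hb
      · intro h; exact ⟨a, h, rfl⟩
    rw [hfiltc]
    apply List.filterMap_congr
    intro a ha
    have ha' : a ∈ l' := List.mem_of_mem_filter ha
    simpa using hval a ha'
end
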